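/- For j ≥ 1, if ω is a binary word with |ω|_0 ≤ |ω|_1 avoiding the factor (10)^j1 and ω ends at ordinate k ≥ 2 (i.e., |ω|_1 − |ω|_0 = k) and does not end with the suffix (10)^j, then for all 1 ≤ h ≤ j and 2 ≤ m ≤ k, the word ω·1·0^m·(10)^{h-1} avoids the factor (10)^j1 and has |ω|_1 + h ones and ordinate k + 1 − m. -/

import Mathlib

/-- The pattern `(10)^j 1` (`true` = 1 / up step, `false` = 0 / down step). -/
def pat (j : ℕ) : List Bool := (List.replicate j [true, false]).flatten ++ [true]

/-- `(10)^j`. -/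
def alt (j : ℕ) : List Bool := (List.replicate j [true, false]).flatten

def ht (w : List Bool) : ℤ := (w.count true : ℤ) - (w.count false : ℤ)

/-! Since `m ≥ 2`, the appended word `1 0^m (10)^(h-1)` contains the factor `00`, which an
occurrence of the alternating word `(10)^j 1` can neither contain nor end in. Such an
occurrence therefore lies in `ω 1`, where the hypotheses on `ω` exclude it, or in
`0^m (10)^(h-1)`, which has only `h - 1 < j + 1` ones. The counts are additive. -/

lemma alt_succ (n : ℕ) : alt (n + 1) = true :: false :: alt n := by
  simp [alt, List.replicate_succ]

lemma pat_eq_alt_append (j : ℕ) : pat j = alt j ++ [true] := rfl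

lemma pat_succ (j : ℕ) : pat (j + 1) = true :: false :: pat j := by
  simp [pat_eq_alt_append, alt_succ]

lemma count_alt (n : ℕ) (b : Bool) : (alt n).count b = n := by
  induction n with
  | zero => simp [alt]
  | succ n ih => cases b <;> simp [alt_succ, ih]

lemma count_true_pat (j : ℕ) : (pat j).count true = j + 1 := by
  simp [pat_eq_alt_append, count_alt]

lemma isChain_ne_false_cons_pat (j : ℕ) : (false :: pat j).IsChain (· ≠ ·) := by
  induction j with
  | zero => simp [pat]
  | succ j ih =>
    rw [pat_succ, List.isChain_cons_cons, List.isChain_cons_cons]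
    exact ⟨by decide, by decide, ih⟩

lemma isChain_ne_pat (j : ℕ) : (pat j).IsChain (· ≠ ·) :=
  (isChain_ne_false_cons_pat j).tail

lemma ht_append (u v : List Bool) : ht (u ++ v) = ht u + ht v := by
  simp only [ht, List.count_append]
  push_cast
  ring

lemma ht_replicate_false (m : ℕ) : ht (List.replicate m false) = -m := by
  simp [ht, List.count_replicate]

lemma ht_alt (n : ℕ) : ht (alt n) = 0 := by
  simp [ht, count_alt]

lemma infix_append_cons_cons_of_isChain_ne {α : Type*} {p xs ys : List α} {a : α}
    (hp : p.IsChain (· ≠ ·)) (hlast : p.getLast? ≠ some a)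
    (h : p <:+: xs ++ a :: a :: ys) : p <:+: xs ∨ p <:+: a :: a :: ys := by
  rcases List.infix_append_iff_ne_nil.mp h with hxs | hys | ⟨p₁, p₂, -, hp₂, rfl, -, hpre⟩
  · exact Or.inl hxs
  · exact Or.inr hys
  · -- a straddling occurrence would end in `a` or contain the factor `a a`
    exfalso
    obtain ⟨b, q, rfl⟩ := List.exists_cons_of_ne_nil hp₂
    obtain ⟨hb, hq⟩ := List.cons_prefix_cons.mp hpre
    rcases q with _ | ⟨c, q⟩
    · exact hlast (by simp [hb])
    · have hc := (List.cons_prefix_cons.mp hq).1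
      have := hp.infix (List.infix_append' p₁ [b, c] q)
      simp [hb, hc] at this

lemma infix_append_singleton_of_append_singleton {α : Type*} {l xs : List α} {a : α}
    (h : l ++ [a] <:+: xs ++ [a]) : l ++ [a] <:+: xs ∨ l <:+ xs := by
  rcases List.infix_concat_iff.mp h with hsuf | hxs
  · exact Or.inr (List.suffix_append_self_iff.mp hsuf)
  · exact Or.inl hxs

lemma not_pat_infix_append_true_false_false {j : ℕ} {ω ys : List Bool}
    (havoid : ¬ pat j <:+: ω) (hsuf : ¬ alt j <:+ ω) (hys : ys.count true ≤ j) :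
    ¬ pat j <:+: ω ++ true :: false :: false :: ys := by
  intro hpat
  rw [← List.singleton_append, ← List.append_assoc] at hpat
  rcases infix_append_cons_cons_of_isChain_ne (isChain_ne_pat j) (by simp [pat]) hpat
    with hleft | hright
  · rcases infix_append_singleton_of_append_singleton hleft with hω | hω
    · exact havoid hω
    · exact hsuf hω
  · have := hright.count_le true
    rw [count_true_pat, List.count_cons_of_ne (by decide), List.count_cons_of_ne (by decide)]
      at this
    omega

theorem stmt13_general (j : ℕ) (ω : List Bool) (k : ℤ)
    (havoid : ¬ pat j <:+: ω)
    (hend : ht ω = k)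
    (hsuf : ¬ alt j <:+ ω) :
    ∀ (h m : ℕ), 1 ≤ h → h ≤ j → 2 ≤ m → (m : ℤ) ≤ k →
      ¬ pat j <:+: (ω ++ [true] ++ List.replicate m false ++ alt (h - 1)) ∧
      (ω ++ [true] ++ List.replicate m false ++ alt (h - 1)).count true
        = ω.count true + h ∧
      ht (ω ++ [true] ++ List.replicate m false ++ alt (h - 1)) = k + 1 - m := by
  intro h m h_pos h_le_j two_le_m _
  have hword : ω ++ [true] ++ List.replicate m false ++ alt (h - 1)
      = ω ++ true :: false :: false :: (List.replicate (m - 2) false ++ alt (h - 1)) := by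
    obtain ⟨m, rfl⟩ : ∃ m', m = m' + 2 := ⟨m - 2, by omega⟩
    simp [List.replicate_succ]
  refine ⟨hword ▸ not_pat_infix_append_true_false_false havoid hsuf ?_, ?_, ?_⟩
  · simp only [List.count_append, List.count_replicate, beq_true, Bool.false_eq_true,
      ↓reduceIte, count_alt, zero_add]
    omega
  · simp only [List.count_append, List.count_replicate, beq_true, Bool.false_eq_true,
      ↓reduceIte, count_alt, List.count_singleton_self]
    omega
  · simp only [ht_append, ht_replicate_false, ht_alt, hend, show ht [true] = 1 from rfl]
    ring

theorem stmt13 (j : ℕ) (hj : 1 ≤ j) (ω : List Bool) (k : ℤ)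
    (hle : ω.count false ≤ ω.count true)
    (havoid : ¬ pat j <:+: ω)
    (hend : ht ω = k) (hk : 2 ≤ k)
    (hsuf : ¬ alt j <:+ ω) :
    ∀ (h m : ℕ), 1 ≤ h → h ≤ j → 2 ≤ m → (m : ℤ) ≤ k →
      ¬ pat j <:+: (ω ++ [true] ++ List.replicate m false ++ alt (h - 1)) ∧
      (ω ++ [true] ++ List.replicate m false ++ alt (h - 1)).count true
        = ω.count true + h ∧
      ht (ω ++ [true] ++ List.replicate m false ++ alt (h - 1)) = k + 1 - m :=
  stmt13_general j ω k havoid hend hsuf
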